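/- If I is a strongly stable monomial ideal generated in a single degree d in K[x_1,...,x_n], a-determined for a vector a in N^n, then the a-dual \hat{I}^{[a]} has linear quotients with respect to a suitable ordering of its minimal generators; consequently \hat{I}^{[a]} has a linear resolution. -/

import Mathlib

open MvPolynomial Finsupp

/-- The monomial ideal generated by the monomials with exponent vectors in `S`. -/
noncomputable def monomialIdeal (K : Type*) [Field K] {n : ℕ} (S : Finset (Fin n →₀ ℕ)) :
    Ideal (MvPolynomial (Fin n) K) :=
  Ideal.span ((fun s => (monomial s (1 : K))) '' S)

/-- Exponent vectors of the generators `x^a / f` of the `a`-dual. -/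
noncomputable def dualGens {n : ℕ} (a : Fin n →₀ ℕ) (S : Finset (Fin n →₀ ℕ)) :
    Finset (Fin n →₀ ℕ) :=
  S.image (fun s => a - s)

/-- Strong stability: for every monomial `m ∈ I`, every `x_i | m` and `j < i`,
`m·x_j/x_i ∈ I`. -/
def IsStronglyStable {K : Type*} [Field K] {n : ℕ}
    (I : Ideal (MvPolynomial (Fin n) K)) : Prop :=
  ∀ (s : Fin n →₀ ℕ) (i j : Fin n), monomial s (1 : K) ∈ I →
    s i ≠ 0 → j < i →
    monomial (s + single j 1 - single i 1) (1 : K) ∈ I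

/-- A monomial ideal with (minimal) generating exponent vectors `T` has linear
quotients if there is an ordering `g_1,…,g_v` of `T` such that each colon ideal
`(g_1,…,g_{k-1}) : g_k` is generated by variables. -/
def HasLinearQuotients (K : Type*) [Field K] {n : ℕ} (T : Finset (Fin n →₀ ℕ)) : Prop :=
  ∃ L : List (Fin n →₀ ℕ), L.Nodup ∧ L.toFinset = T ∧
    ∀ (k : ℕ) (hk : k < L.length), 1 ≤ k →
      ∃ V : Set (Fin n),
        Submodule.colon (monomialIdeal K (L.take k).toFinset)
            (Ideal.span {monomial (L.get ⟨k, hk⟩) (1 : K)}) =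
          Ideal.span ((fun j => (X j : MvPolynomial (Fin n) K)) '' V)

/-! Sort `S` lexicographically decreasingly, `s₁ > s₂ > ⋯`, and take the dual generators
`a - sₖ` in this order. If `x^(a - sⱼ)` with `j < k` divides `x^c · x^(a - sₖ)`, then, as `sⱼ`
and `sₖ` have the same degree and `sⱼ > sₖ`, there are `p < t` with `sⱼ p > sₖ p` and
`sⱼ t < sₖ t`; the latter forces `x_t ∣ x^c`. Strong stability, together with the equal degrees,
puts `s'' = sₖ + e_p - e_t` in `S`; it comes before `sₖ` and `x^(a - s'')` divides
`x_t · x^(a - sₖ)`. Hence `(x^(a - s₁), …, x^(a - sₖ₋₁)) : x^(a - sₖ)` is generated by such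
variables `x_t`. -/

namespace Finsupp

variable {σ : Type*}

theorem eq_of_le_of_degree_eq {s s' : σ →₀ ℕ} (h : s ≤ s') (hd : degree s = degree s') :
    s = s' := by
  have hzero : degree (s' - s) = 0 := by
    have := congrArg degree (add_tsub_cancel_of_le h)
    rw [map_add, ← hd] at this
    omega
  exact le_antisymm h (tsub_eq_zero_iff_le.mp ((degree_eq_zero_iff _).mp hzero))

theorem add_single_sub_single_add_single {s : σ →₀ ℕ} {t : σ} (ht : s t ≠ 0) (p : σ) :
    s + single p 1 - single t 1 + single t 1 = s + single p 1 := by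
  refine tsub_add_cancel_of_le fun i => ?_
  rcases eq_or_ne t i with rfl | hti
  · simp only [single_eq_same, coe_add, Pi.add_apply]
    omega
  · simp [single_eq_of_ne' hti]

theorem tsub_le_tsub_add_single {a s s'' : σ →₀ ℕ} {t : σ} (h : s ≤ s'' + single t 1) :
    a - s'' ≤ a - s + single t 1 := by
  rw [tsub_le_iff_right]
  calc a ≤ a - s + s := le_tsub_add
    _ ≤ a - s + (s'' + single t 1) := add_le_add_right h _
    _ = a - s + single t 1 + s'' := by rw [add_comm s'', add_assoc]

variable [LinearOrder σ]

theorem exists_lt_apply_of_toLex_lt {s s' : σ →₀ ℕ} (hd : degree s = degree s')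
    (h : toLex s < toLex s') : ∃ p t, p < t ∧ s p < s' p ∧ s' t < s t := by
  obtain ⟨p, hbelow, hp⟩ := Lex.lt_iff.mp h
  refine ⟨p, ?_⟩
  by_contra! habove
  have hle : s ≤ s' := fun i => by
    rcases lt_trichotomy i p with hi | rfl | hi
    · exact (hbelow i hi).le
    · exact hp.le
    · exact habove i hi hp
  have := eq_of_le_of_degree_eq hle hd
  subst this
  exact lt_irrefl _ hp

theorem toLex_lt_add_single_sub_single {s : σ →₀ ℕ} {p t : σ} (hpt : p < t) (ht : s t ≠ 0) :
    toLex s < toLex (s + single p 1 - single t 1) := by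
  have key : toLex s + toLex (single t 1) <
      toLex (s + single p 1 - single t 1) + toLex (single t 1) := by
    rw [← toLex_add, ← toLex_add, add_single_sub_single_add_single ht, toLex_add, toLex_add]
    exact add_lt_add_right (Lex.single_lt_iff.mpr hpt) _
  exact lt_of_add_lt_add_right key

end Finsupp

theorem List.SortedGT.mem_take_iff {α : Type*} [LinearOrder α] {l : List α} (hl : l.SortedGT)
    {k : ℕ} (hk : k < l.length) {x : α} : x ∈ l.take k ↔ x ∈ l ∧ l[k] < x := by
  rw [List.mem_take_iff_getElem, List.mem_iff_getElem]
  constructor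
  · rintro ⟨i, hi, rfl⟩
    exact ⟨⟨i, by omega, rfl⟩, hl.getElem_lt_getElem_iff.mpr (by omega)⟩
  · rintro ⟨⟨i, hi, rfl⟩, hlt⟩
    exact ⟨i, by have := hl.getElem_lt_getElem_iff.mp hlt; omega, rfl⟩

section MonomialIdeal

variable {K : Type*} [Field K] {n : ℕ}

theorem monomial_mem_monomialIdeal_iff {c : Fin n →₀ ℕ} {S : Finset (Fin n →₀ ℕ)} :
    monomial c (1 : K) ∈ monomialIdeal K S ↔ ∃ s ∈ S, s ≤ c := by
  rw [monomialIdeal, mem_ideal_span_monomial_image]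
  simp

theorem colon_monomialIdeal_eq_span_X (T : Finset (Fin n →₀ ℕ)) (u : Fin n →₀ ℕ)
    (H : ∀ w ∈ T, ∀ c : Fin n →₀ ℕ, w ≤ c + u →
      ∃ t, c t ≠ 0 ∧ ∃ w' ∈ T, w' ≤ u + single t 1) :
    Submodule.colon (monomialIdeal K T) (Ideal.span {monomial u (1 : K)}) =
      Ideal.span (X '' {t | ∃ w' ∈ T, w' ≤ u + single t 1}) := by
  apply le_antisymm
  · intro p hp
    have hpu : p * monomial u 1 ∈ monomialIdeal K T := by
      simpa using Submodule.mem_colon.mp hp (monomial u 1) (Ideal.subset_span rfl)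
    rw [mem_ideal_span_X_image]
    intro c hc
    have hcu : c + u ∈ (p * monomial u (1 : K)).support := by
      rwa [MvPolynomial.mem_support_iff, coeff_mul_monomial, mul_one,
        ← MvPolynomial.mem_support_iff]
    obtain ⟨w, hwT, hwle⟩ := mem_ideal_span_monomial_image.mp hpu _ hcu
    obtain ⟨t, hct, hw'⟩ := H w (by exact_mod_cast hwT) c hwle
    exact ⟨t, hw', hct⟩
  · rw [Ideal.span_le]
    rintro _ ⟨t, ⟨w', hw'T, hw'le⟩, rfl⟩
    rw [SetLike.mem_coe, Submodule.mem_colon]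
    intro q hq
    obtain ⟨r, rfl⟩ := Ideal.mem_span_singleton'.mp hq
    have hX : X t * monomial u (1 : K) ∈ monomialIdeal K T := by
      rw [X, monomial_mul, one_mul, add_comm]
      exact monomial_mem_monomialIdeal_iff.mpr ⟨w', hw'T, hw'le⟩
    rw [smul_eq_mul, mul_left_comm]
    exact Ideal.mul_mem_left _ _ hX

theorem hasLinearQuotients_of_exchange (L : List (Fin n →₀ ℕ)) (hL : L.Nodup)
    (H : ∀ (k : ℕ) (hk : k < L.length), ∀ w ∈ L.take k, ∀ c : Fin n →₀ ℕ, w ≤ c + L[k] →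
      ∃ t, c t ≠ 0 ∧ ∃ w' ∈ L.take k, w' ≤ L[k] + single t 1) :
    HasLinearQuotients K L.toFinset := by
  classical
  refine ⟨L, hL, rfl, fun k hk _ =>
    ⟨{t | ∃ w' ∈ (L.take k).toFinset, w' ≤ L[k] + single t 1}, ?_⟩⟩
  refine colon_monomialIdeal_eq_span_X _ _ fun w hw c hwc => ?_
  simpa using H k hk w (List.mem_toFinset.mp hw) c hwc

theorem IsStronglyStable.add_single_sub_single_mem {S : Finset (Fin n →₀ ℕ)} {d : ℕ}
    (hstable : IsStronglyStable (monomialIdeal K S)) (hdeg : ∀ s ∈ S, degree s = d)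
    {s : Fin n →₀ ℕ} (hs : s ∈ S) {p t : Fin n} (ht : s t ≠ 0) (hpt : p < t) :
    s + single p 1 - single t 1 ∈ S := by
  obtain ⟨s'', hs'', hle⟩ := monomial_mem_monomialIdeal_iff.mp
    (hstable s t p (monomial_mem_monomialIdeal_iff.mpr ⟨s, hs, le_rfl⟩) ht hpt)
  have hd : degree (s + single p 1 - single t 1) = d := by
    have := congrArg degree (add_single_sub_single_add_single ht p)
    simp only [map_add, degree_single, hdeg s hs] at this
    omega
  rwa [← eq_of_le_of_degree_eq hle (by rw [hd, hdeg s'' hs''])]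

theorem IsStronglyStable.exists_exchange {S : Finset (Fin n →₀ ℕ)} {d : ℕ}
    (hstable : IsStronglyStable (monomialIdeal K S)) (hdeg : ∀ s ∈ S, degree s = d)
    {s s' : Fin n →₀ ℕ} (hs : s ∈ S) (hs' : s' ∈ S) (hlt : toLex s < toLex s') :
    ∃ t, s' t < s t ∧ ∃ s'' ∈ S, toLex s < toLex s'' ∧ s ≤ s'' + single t 1 := by
  obtain ⟨p, t, hpt, -, hts⟩ := exists_lt_apply_of_toLex_lt (by rw [hdeg s hs, hdeg s' hs']) hlt
  have ht : s t ≠ 0 := by omega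
  refine ⟨t, hts, _, hstable.add_single_sub_single_mem hdeg hs ht hpt,
    toLex_lt_add_single_sub_single hpt ht, ?_⟩
  rw [add_single_sub_single_add_single ht]
  exact le_self_add

theorem hasLinearQuotients_dualGens_of_exchange {S : Finset (Fin n →₀ ℕ)} {a : Fin n →₀ ℕ}
    (hdet : ∀ s ∈ S, s ≤ a)
    (hexch : ∀ s ∈ S, ∀ s' ∈ S, toLex s < toLex s' →
      ∃ t, s' t < s t ∧ ∃ s'' ∈ S, toLex s < toLex s'' ∧ s ≤ s'' + single t 1) :
    HasLinearQuotients K (dualGens a S) := by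
  classical
  set L := (S.map toLex.toEmbedding).sort (· ≥ ·)
  have hL : L.SortedGT := Finset.sortedGT_sort _
  have hmem : ∀ x, x ∈ L ↔ ofLex x ∈ S := by simp [L]
  have hgens : (L.map fun x => a - ofLex x).toFinset = dualGens a S := by
    ext
    simp [dualGens, hmem]
  have hnodup : (L.map fun x => a - ofLex x).Nodup := hL.nodup.map_on fun x hx y hy hxy =>
    ofLex_inj.mp <| (tsub_right_inj (hdet _ ((hmem x).1 hx)) (hdet _ ((hmem y).1 hy))).mp hxy
  rw [← hgens]
  refine hasLinearQuotients_of_exchange _ hnodup fun k hk w hw c hwc => ?_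
  rw [List.length_map] at hk
  rw [List.getElem_map] at hwc ⊢
  rw [← List.map_take] at hw ⊢
  obtain ⟨x, hx, rfl⟩ := List.mem_map.mp hw
  obtain ⟨hxL, hlt⟩ := (hL.mem_take_iff hk).mp hx
  have hs := (hmem _).mp (List.getElem_mem hk)
  obtain ⟨t, hts, s'', hs'', hlt'', hle⟩ := hexch _ hs _ ((hmem x).mp hxL) hlt
  refine ⟨t, ?_, a - s'', ?_, tsub_le_tsub_add_single hle⟩
  · have hct := hwc t
    have hsa := hdet _ hs t
    simp only [Finsupp.add_apply, tsub_apply] at hct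
    omega
  · exact List.mem_map.mpr ⟨toLex s'', (hL.mem_take_iff hk).mpr ⟨(hmem _).mpr hs'', hlt''⟩, rfl⟩

end MonomialIdeal

/-- If `I` is a strongly stable monomial ideal generated in a single degree `d` and
`a`-determined, then its `a`-dual has linear quotients with respect to a suitable
ordering of its minimal generators. -/
theorem dual_stronglyStable_hasLinearQuotients (K : Type*) [Field K] {n d : ℕ}
    (a : Fin n →₀ ℕ) (S : Finset (Fin n →₀ ℕ))
    (hstable : IsStronglyStable (monomialIdeal K S))
    (hdeg : ∀ s ∈ S, (s.sum fun _ e => e) = d)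
    (hdet : ∀ s ∈ S, s ≤ a) :
    HasLinearQuotients K (dualGens a S) :=
  hasLinearQuotients_dualGens_of_exchange hdet fun _ hs _ hs' =>
    hstable.exists_exchange hdeg hs hs'
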